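/- arXiv:2602.21767 — 2 statements merged into one kernel-verified Lean document; each statement's English description precedes it below -/
import Mathlib

section
/- Under the assumptions of the quadratic-form construction, if additionally Λ^T P + P Λ ≤ -I (negative definite with margin), P is positive definite, and the map Φ(x) = (φ_1(x),...,φ_d(x)) is nonzero for x ≠ 0, then V(x) = Φ(x)^T P Φ(x) satisfies V(x) > 0 for x ≠ 0 and ∇V(x)·f(x) ≤ -‖Φ(x)‖² < 0 for x ≠ 0. -/
open Matrix

/-! With `u = Φ(x)`, the chain rule and the eigenfunction equations give
`∇V(x)·f(x) = uᵀ(ΛᵀP + PΛ)u`, which the Loewner bound `ΛᵀP + PΛ ≤ -I` caps by `-uᵀu`;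
positivity of `V` and of `uᵀu` away from the origin come from `P ≻ 0` and `Φ(x) ≠ 0`. -/

namespace Matrix

variable {ι R : Type*} [Fintype ι]

theorem dotProduct_mulVec_self_eq_sum_sum [CommSemiring R] (M : Matrix ι ι R) (u : ι → R) :
    u ⬝ᵥ M *ᵥ u = ∑ i, ∑ j, M i j * u i * u j := by
  simp only [dotProduct, mulVec, Finset.mul_sum]
  exact Finset.sum_congr rfl fun i _ => Finset.sum_congr rfl fun j _ => by ring

theorem sum_sum_mul_diagonal_eq_dotProduct [DecidableEq ι] [CommSemiring R] (P : Matrix ι ι R)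
    (lam u : ι → R) :
    ∑ i, ∑ j, P i j * (u i * (lam j * u j) + u j * (lam i * u i)) =
      u ⬝ᵥ ((diagonal lam)ᵀ * P + P * diagonal lam) *ᵥ u := by
  rw [dotProduct_mulVec_self_eq_sum_sum]
  simp only [diagonal_transpose, add_apply, diagonal_mul, mul_diagonal]
  exact Finset.sum_congr rfl fun i _ => Finset.sum_congr rfl fun j _ => by ring

theorem dotProduct_mulVec_le_neg_of_posSemidef [DecidableEq ι] {M : Matrix ι ι ℝ} (hM : (-1 - M).PosSemidef)
    (u : ι → ℝ) : u ⬝ᵥ M *ᵥ u ≤ -(u ⬝ᵥ u) := by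
  have h := hM.dotProduct_mulVec_nonneg u
  simp only [star_trivial, sub_mulVec, neg_mulVec, one_mulVec, dotProduct_sub,
    dotProduct_neg] at h
  linarith

end Matrix

section QuadraticForm

variable {E ι : Type*} [NormedAddCommGroup E] [NormedSpace ℝ E] [Fintype ι]

theorem hasFDerivAt_sum_sum_mul (P : Matrix ι ι ℝ) {φ : ι → E → ℝ} {φ' : ι → E →L[ℝ] ℝ} {x : E}
    (hφ : ∀ i, HasFDerivAt (φ i) (φ' i) x) :
    HasFDerivAt (fun y => ∑ i, ∑ j, P i j * φ i y * φ j y)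
      (∑ i, ∑ j, P i j • (φ i x • φ' j + φ j x • φ' i)) x :=
  HasFDerivAt.fun_sum fun i _ => HasFDerivAt.fun_sum fun j _ => by
    simpa only [mul_assoc] using ((hφ i).fun_mul (hφ j)).const_mul (P i j)

theorem fderiv_sum_sum_mul_of_eigen [DecidableEq ι] (P : Matrix ι ι ℝ) {φ : ι → E → ℝ}
    {lam : ι → ℝ} {x v : E} (hφ : ∀ i, DifferentiableAt ℝ (φ i) x)
    (heig : ∀ i, fderiv ℝ (φ i) x v = lam i * φ i x) :
    fderiv ℝ (fun y => ∑ i, ∑ j, P i j * φ i y * φ j y) x v =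
      (fun i => φ i x) ⬝ᵥ ((diagonal lam)ᵀ * P + P * diagonal lam) *ᵥ (fun i => φ i x) := by
  rw [(hasFDerivAt_sum_sum_mul P fun i => (hφ i).hasFDerivAt).fderiv,
    ← sum_sum_mul_diagonal_eq_dotProduct]
  simp only [FunLike.coe_sum, Finset.sum_apply, FunLike.coe_smul,
    FunLike.coe_add, Pi.smul_apply, Pi.add_apply, smul_eq_mul, heig]

end QuadraticForm

theorem lyapunov_quadratic_form_strict_general
    {d : ℕ} (f : EuclideanSpace ℝ (Fin d) → EuclideanSpace ℝ (Fin d))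
    (φ : Fin d → EuclideanSpace ℝ (Fin d) → ℝ)
    (hφ : ∀ i, ContDiff ℝ 1 (φ i))
    (lam : Fin d → ℝ)
    (heig : ∀ i x, fderiv ℝ (φ i) x (f x) = lam i * φ i x)
    (P : Matrix (Fin d) (Fin d) ℝ) (hPpos : P.PosDef)
    (hneg : (-(1 : Matrix (Fin d) (Fin d) ℝ)
        - ((Matrix.diagonal lam)ᵀ * P + P * Matrix.diagonal lam)).PosSemidef)
    (hΦ : ∀ x, x ≠ 0 → (fun i => φ i x) ≠ 0)
    (V : EuclideanSpace ℝ (Fin d) → ℝ)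
    (hV : V = fun x => ∑ i, ∑ j, P i j * φ i x * φ j x) :
    ∀ x, x ≠ 0 →
      0 < V x ∧
      fderiv ℝ V x (f x) ≤ -(∑ i, (φ i x) ^ 2) ∧
      -(∑ i, (φ i x) ^ 2) < 0 := by
  intro x hx
  set u : Fin d → ℝ := fun i => φ i x
  have hu : u ≠ 0 := hΦ x hx
  have hnormsq : ∑ i, φ i x ^ 2 = u ⬝ᵥ u := by simp only [dotProduct, u, sq]
  have hdecay : fderiv ℝ V x (f x) ≤ -(u ⬝ᵥ u) := by
    rw [hV, fderiv_sum_sum_mul_of_eigen P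
      (fun i => ((hφ i).differentiable one_ne_zero).differentiableAt) (heig · x)]
    exact dotProduct_mulVec_le_neg_of_posSemidef hneg u
  have hVpos : 0 < V x := by
    simpa [hV, dotProduct_mulVec_self_eq_sum_sum] using hPpos.dotProduct_mulVec_pos hu
  have hupos : 0 < u ⬝ᵥ u := by simpa using dotProduct_star_self_pos_iff.mpr hu
  exact ⟨hVpos, hnormsq ▸ hdecay, hnormsq ▸ neg_neg_of_pos hupos⟩

/-- If P is positive definite, ΛᵀP + PΛ ≤ -I in the Loewner order, and the
eigenfunction map Φ vanishes only at the origin, then V = ΦᵀPΦ is a strict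
Lyapunov function: V(x) > 0 and ∇V(x)·f(x) ≤ -‖Φ(x)‖² < 0 for x ≠ 0. -/
theorem lyapunov_quadratic_form_strict
    {d : ℕ} (f : EuclideanSpace ℝ (Fin d) → EuclideanSpace ℝ (Fin d))
    (hf : ContDiff ℝ 1 f)
    (φ : Fin d → EuclideanSpace ℝ (Fin d) → ℝ)
    (hφ : ∀ i, ContDiff ℝ 1 (φ i))
    (lam : Fin d → ℝ)
    (heig : ∀ i x, fderiv ℝ (φ i) x (f x) = lam i * φ i x)
    (P : Matrix (Fin d) (Fin d) ℝ) (hP : P.IsSymm) (hPpos : P.PosDef)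
    (hneg : (-(1 : Matrix (Fin d) (Fin d) ℝ)
        - ((Matrix.diagonal lam)ᵀ * P + P * Matrix.diagonal lam)).PosSemidef)
    (hΦ : ∀ x, x ≠ 0 → (fun i => φ i x) ≠ 0)
    (V : EuclideanSpace ℝ (Fin d) → ℝ)
    (hV : V = fun x => ∑ i, ∑ j, P i j * φ i x * φ j x) :
    ∀ x, x ≠ 0 →
      0 < V x ∧
      fderiv ℝ V x (f x) ≤ -(∑ i, (φ i x) ^ 2) ∧
      -(∑ i, (φ i x) ^ 2) < 0 :=
  lyapunov_quadratic_form_strict_general f φ hφ lam heig P hPpos hneg hΦ V hV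
end

section
/- Let h be C^1 on the basin of attraction satisfying ∇h(x)·f(x) = λh(x) - w^T G(x) along trajectories, with λ < 0, h(0)=0, and suppose e^{-λt} w^T G(s_t(x)) is integrable in t over [0,∞) and e^{-λt} h(s_t(x)) → 0 as t → ∞. Then h admits the representation h(x) = ∫_0^∞ e^{-λ t} w^T G(s_t(x)) dt. -/
open MeasureTheory Filter Topology Set
open scoped RealInnerProductSpace

theorem eq_integral_Ioi_of_hasDerivAt_neg_of_tendsto_zero {F g : ℝ → ℝ} {a : ℝ}
    (hderiv : ∀ t ∈ Ici a, HasDerivAt F (-g t) t) (hg : IntegrableOn g (Ioi a))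
    (hF : Tendsto F atTop (𝓝 0)) :
    F a = ∫ t in Ioi a, g t := by
  have hFTC := integral_Ioi_of_hasDerivAt_of_tendsto' hderiv hg.neg hF
  rw [integral_neg] at hFTC
  linarith

/-- The eigenvalue term `λ h` produced by differentiating `h ∘ γ` cancels the derivative of the
weight `e^{-λt}`. -/
theorem hasDerivAt_exp_neg_mul_mul_comp {E : Type*} [NormedAddCommGroup E]
    [NormedSpace ℝ E] {γ : ℝ → E} {γ' : E} {h g : E → ℝ} {lam t : ℝ}
    (hγ : HasDerivAt γ γ' t) (hh : DifferentiableAt ℝ h (γ t))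
    (hpde : fderiv ℝ h (γ t) γ' = lam * h (γ t) - g (γ t)) :
    HasDerivAt (fun τ => Real.exp (-lam * τ) * h (γ τ))
      (-(Real.exp (-lam * t) * g (γ t))) t := by
  have hexp : HasDerivAt (fun τ => Real.exp (-lam * τ)) (Real.exp (-lam * t) * -lam) t := by
    simpa using ((hasDerivAt_id t).const_mul (-lam)).exp
  refine (hexp.mul (hh.hasFDerivAt.comp_hasDerivAt t hγ)).congr_deriv ?_
  rw [hpde, Function.comp_apply]
  ring

theorem path_integral_representation_general
    {d : ℕ} (f : EuclideanSpace ℝ (Fin d) → EuclideanSpace ℝ (Fin d))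
    (s : ℝ → EuclideanSpace ℝ (Fin d) → EuclideanSpace ℝ (Fin d))
    (hs0 : ∀ x, s 0 x = x)
    (hflow : ∀ x, ∀ t : ℝ, HasDerivAt (fun τ => s τ x) (f (s t x)) t)
    (G : EuclideanSpace ℝ (Fin d) → EuclideanSpace ℝ (Fin d))
    (w : EuclideanSpace ℝ (Fin d)) (lam : ℝ)
    (h : EuclideanSpace ℝ (Fin d) → ℝ) (hh : ContDiff ℝ 1 h)
    (hpde : ∀ x, fderiv ℝ h x (f x) = lam * h x - ⟪w, G x⟫)
    (x : EuclideanSpace ℝ (Fin d))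
    (hint : IntegrableOn (fun t : ℝ => Real.exp (-lam * t) * ⟪w, G (s t x)⟫)
        (Set.Ioi (0:ℝ)))
    (hlim : Tendsto (fun t : ℝ => Real.exp (-lam * t) * h (s t x)) atTop (𝓝 0)) :
    h x = ∫ t in Set.Ioi (0:ℝ), Real.exp (-lam * t) * ⟪w, G (s t x)⟫ := by
  have hderiv : ∀ t ∈ Ici (0 : ℝ), HasDerivAt (fun τ => Real.exp (-lam * τ) * h (s τ x))
      (-(Real.exp (-lam * t) * ⟪w, G (s t x)⟫)) t := fun t _ =>
    hasDerivAt_exp_neg_mul_mul_comp (g := fun y => ⟪w, G y⟫) (hflow x t)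
      (hh.differentiable one_ne_zero _) (hpde (s t x))
  simpa [hs0] using eq_integral_Ioi_of_hasDerivAt_neg_of_tendsto_zero hderiv hint hlim

/-- Path-integral representation of the nonlinear part of a Koopman eigenfunction:
if ∇h·f = λh - wᵀG, h(0) = 0, the integrand is integrable and
e^{-λt} h(s_t(x)) → 0, then h(x) = ∫₀^∞ e^{-λt} wᵀG(s_t(x)) dt. -/
theorem path_integral_representation
    {d : ℕ} (f : EuclideanSpace ℝ (Fin d) → EuclideanSpace ℝ (Fin d))
    (hf : ContDiff ℝ 1 f) (hf0 : f 0 = 0)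
    (s : ℝ → EuclideanSpace ℝ (Fin d) → EuclideanSpace ℝ (Fin d))
    (hs0 : ∀ x, s 0 x = x)
    (hflow : ∀ x, ∀ t : ℝ, HasDerivAt (fun τ => s τ x) (f (s t x)) t)
    (hattr : ∀ x, Tendsto (fun t => s t x) atTop (𝓝 0))
    (G : EuclideanSpace ℝ (Fin d) → EuclideanSpace ℝ (Fin d))
    (hG : G = fun x => f x - fderiv ℝ f 0 x)
    (w : EuclideanSpace ℝ (Fin d)) (lam : ℝ) (hlam : lam < 0)
    (h : EuclideanSpace ℝ (Fin d) → ℝ) (hh : ContDiff ℝ 1 h) (hh0 : h 0 = 0)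
    (hpde : ∀ x, fderiv ℝ h x (f x) = lam * h x - ⟪w, G x⟫)
    (x : EuclideanSpace ℝ (Fin d))
    (hint : IntegrableOn (fun t : ℝ => Real.exp (-lam * t) * ⟪w, G (s t x)⟫)
        (Set.Ioi (0:ℝ)))
    (hlim : Tendsto (fun t : ℝ => Real.exp (-lam * t) * h (s t x)) atTop (𝓝 0)) :
    h x = ∫ t in Set.Ioi (0:ℝ), Real.exp (-lam * t) * ⟪w, G (s t x)⟫ :=
  path_integral_representation_general f s hs0 hflow G w lam h hh hpde x hint hlim
end
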